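/- arXiv:0708.4093 — 5 statements merged into one kernel-verified Lean document; each statement's English description precedes it below -/
import Mathlib

section
/- Let $V$ be a finite-dimensional real normed vector space decomposed as an orthogonal direct sum $V = V^+ \oplus V^0 \oplus V^-$ with projections $q^+$, $q^0$, $q^{0-} = q^0 + q^-$, and $q^{+0} = q^+ + q^0$. Suppose $A \colon V^{+} \to V^{+}$ and $B \colon V^{0-} \to V^{+0}$ are linear maps with $B$ invertible and $\|A\| \geq 1$, and let $u \colon V \to V$ be a linear map such that $q^{+0}(u v) = A(q^+ v) + B(q^{0-} v)$ for all $v \in V$. Set $\kappa = \tfrac{1}{3}\min\{1, \|B^{-1}\|^{-1}\|A\|^{-1}\}$. Then for every $v \in V$, $\max\{\|q^+(v)\|, \|q^{+0}(u v)\|\} \geq \kappa \|v\|$. -/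
/-- Quantitative core of the basic lemma (Lemma 3.2): if `V` decomposes orthogonally
(in the Pythagorean sense) as `V⁺ ⊕ V⁰ ⊕ V⁻` via projections `qp, q0, qm`, and a linear
map `u` satisfies `q^{+0}(u v) = A (q⁺ v) + B (q^{0-} v)` with `B` invertible with
`‖B⁻¹‖ = nB` and `‖A‖ = nA ≥ 1`, then
`max (‖q⁺ v‖, ‖q^{+0}(u v)‖) ≥ κ ‖v‖` for `κ = (1/3) min (1, nB⁻¹ nA⁻¹)`. -/
theorem basic_lemma_quantitative
    (V : Type*) [NormedAddCommGroup V] [NormedSpace ℝ V] [FiniteDimensional ℝ V]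
    (qp q0 qm : V →ₗ[ℝ] V)
    (hsum : ∀ v : V, qp v + q0 v + qm v = v)
    (hpyth : ∀ v : V, ‖v‖ ^ 2 = ‖qp v‖ ^ 2 + ‖q0 v‖ ^ 2 + ‖qm v‖ ^ 2)
    (A B u : V →ₗ[ℝ] V)
    (nA nB : ℝ) (hnA : 1 ≤ nA) (hnB : 0 < nB)
    -- `A : V⁺ → V⁺` has operator norm at most `nA`
    (hAnorm : ∀ v : V, ‖A (qp v)‖ ≤ nA * ‖qp v‖)
    (hArange : ∀ v : V, qp (A (qp v)) = A (qp v))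
    -- `B : V^{0-} → V^{+0}` is invertible, with `‖B⁻¹‖ ≤ nB`
    (hBrange : ∀ v : V, qp (B (q0 v + qm v)) + q0 (B (q0 v + qm v)) = B (q0 v + qm v))
    (hBinv : ∀ v : V, ‖q0 v + qm v‖ ≤ nB * ‖B (q0 v + qm v)‖)
    -- the key structural relation `q^{+0}(u v) = A(q⁺ v) + B(q^{0-} v)`
    (hu : ∀ v : V, qp (u v) + q0 (u v) = A (qp v) + B (q0 v + qm v)) :
    ∀ v : V, (1 / 3) * min 1 (nB⁻¹ * nA⁻¹) * ‖v‖ ≤ max ‖qp v‖ ‖qp (u v) + q0 (u v)‖ := by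
  intro v
  set M := max ‖qp v‖ ‖qp (u v) + q0 (u v)‖ with hM
  have hM1 : ‖qp v‖ ≤ M := le_max_left _ _
  have hM2 : ‖qp (u v) + q0 (u v)‖ ≤ M := le_max_right _ _
  have hM0 : 0 ≤ M := le_trans (norm_nonneg _) hM1
  have hnA0 : 0 < nA := lt_of_lt_of_le one_pos hnA
  have h1 : ‖v‖ ≤ ‖qp v‖ + ‖q0 v + qm v‖ := by
    calc ‖v‖ = ‖qp v + (q0 v + qm v)‖ := by rw [← add_assoc, hsum v]
    _ ≤ ‖qp v‖ + ‖q0 v + qm v‖ := norm_add_le _ _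
  have hBe : B (q0 v + qm v) = (qp (u v) + q0 (u v)) - A (qp v) := by
    rw [hu v]; abel
  have h3 : ‖B (q0 v + qm v)‖ ≤ M + nA * M := by
    rw [hBe]
    calc ‖(qp (u v) + q0 (u v)) - A (qp v)‖
        ≤ ‖qp (u v) + q0 (u v)‖ + ‖A (qp v)‖ := norm_sub_le _ _
      _ ≤ M + nA * M := by
          have := hAnorm v
          have h2 : nA * ‖qp v‖ ≤ nA * M := by nlinarith
          nlinarith
  have h2 : ‖q0 v + qm v‖ ≤ nB * (M + nA * M) := by
    calc ‖q0 v + qm v‖ ≤ nB * ‖B (q0 v + qm v)‖ := hBinv v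
      _ ≤ nB * (M + nA * M) := by nlinarith
  have hv : ‖v‖ ≤ M + nB * (M + nA * M) := by nlinarith
  rcases le_total (nB⁻¹ * nA⁻¹) 1 with h | h
  · rw [min_eq_right h]
    have hge : 1 ≤ nA * nB := by
      have hh := mul_le_mul_of_nonneg_right h (le_of_lt (mul_pos hnA0 hnB))
      have he : nB⁻¹ * nA⁻¹ * (nA * nB) = 1 := by field_simp
      rw [he, one_mul] at hh
      exact hh
    have hv3 : ‖v‖ ≤ 3 * (nA * nB) * M := by
      have e1 : 0 ≤ (nA * nB - 1) * M := mul_nonneg (by linarith) hM0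
      have e2 : 0 ≤ (nA - 1) * nB * M := mul_nonneg (mul_nonneg (by linarith) hnB.le) hM0
      nlinarith
    calc 1 / 3 * (nB⁻¹ * nA⁻¹) * ‖v‖
        ≤ 1 / 3 * (nB⁻¹ * nA⁻¹) * (3 * (nA * nB) * M) := by
          have : (0:ℝ) ≤ 1 / 3 * (nB⁻¹ * nA⁻¹) := by positivity
          exact mul_le_mul_of_nonneg_left hv3 this
      _ = M := by field_simp
  · rw [min_eq_left h]
    have hle : nA * nB ≤ 1 := by
      rw [← one_mul (nA * nB)] at *
      nlinarith [mul_le_mul_of_nonneg_right h (le_of_lt (mul_pos hnA0 hnB)),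
        mul_pos hnA0 hnB, inv_mul_cancel₀ (ne_of_gt hnA0), inv_mul_cancel₀ (ne_of_gt hnB)]
    have hnB1 : nB ≤ 1 := by nlinarith
    nlinarith
end

section
/- Let $I = [a,b]$ with $a < b$, let $\mathcal{E}$ be a finite-dimensional real vector space, and let $\Upsilon \colon I \to \mathcal{E}$ be a real-analytic map. For $t \in I$, let $\mathcal{E}_t = \mathrm{span}\{\Upsilon^{(k)}(t) : k \geq 1\}$ be the span of all derivatives of $\Upsilon$ at $t$. Then $\mathcal{E}_s = \mathcal{E}_t$ for all $s, t \in I$, and this common subspace equals the smallest subspace $\mathcal{E}_0$ of $\mathcal{E}$ such that $\Upsilon(I) \subseteq \Upsilon(t_0) + \mathcal{E}_0$ for some (equivalently any) $t_0 \in I$. -/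
/-!
Reduce modulo a closed subspace `W`: if every derivative of `Υ` of order `≥ 1` at `t₀` lies in
`W`, then `t ↦ (Υ t - Υ t₀) mod W` is analytic with vanishing Taylor series at `t₀`, hence constant on the connected
interval: `Υ(I) ⊆ Υ(t₀) + W`, in particular `Υ(I) ⊆ Υ(t₀) + E_{t₀}`.
Conversely, if `Υ(I) ⊆ Υ(t₀) + E₀` then the derivatives of `Υ` on `I`, being limits of difference
quotients within `I`, lie in `E₀`, so `E_s ≤ E₀` for every `s ∈ I`. Taking `E₀ = E_t` gives
`E_s ≤ E_t`, and by symmetry all the `E_t` coincide.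
-/

open Set Filter Topology

section

variable {𝕜 F G : Type*} [NontriviallyNormedField 𝕜] [NormedAddCommGroup F] [NormedSpace 𝕜 F]
  [NormedAddCommGroup G] [NormedSpace 𝕜 G]

theorem ContinuousLinearMap.iteratedDeriv_comp_left {f : 𝕜 → F} {x : 𝕜} {n : WithTop ℕ∞}
    (g : F →L[𝕜] G) (hf : ContDiffAt 𝕜 n f x) {i : ℕ} (hi : i ≤ n) :
    iteratedDeriv i (g ∘ f) x = g (iteratedDeriv i f x) := by
  simp [iteratedDeriv_eq_iteratedFDeriv, g.iteratedFDeriv_comp_left hf hi]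

theorem derivWithin_mem_of_forall_sub_mem {f : 𝕜 → F} {s : Set 𝕜} {W : Submodule 𝕜 F}
    (hW : IsClosed (W : Set F)) {c : F} (hf : ∀ y ∈ s, f y - c ∈ W) (x : 𝕜) :
    derivWithin f s x ∈ W := by
  rw [← derivWithin_sub_const c]
  refine hW.closure_subset_iff.2 ?_ <|
    range_derivWithin_subset_closure_span_image _ (t := s) (by simpa using subset_closure)
      (mem_range_self x)
  exact Submodule.span_le.2 (image_subset_iff.2 hf)

theorem AnalyticOnNhd.iteratedDeriv_mem_of_forall_sub_mem [CompleteSpace F] {f : 𝕜 → F}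
    {s : Set 𝕜} {W : Submodule 𝕜 F} (hf : AnalyticOnNhd 𝕜 f s) (hs : UniqueDiffOn 𝕜 s)
    (hW : IsClosed (W : Set F)) {c : F} (hfW : ∀ y ∈ s, f y - c ∈ W) {n : ℕ} (hn : 0 < n) :
    ∀ x ∈ s, iteratedDeriv n f x ∈ W := by
  induction n generalizing f c with
  | zero => exact absurd hn (lt_irrefl 0)
  | succ n ih =>
    have hderiv : ∀ x ∈ s, deriv f x ∈ W := fun x hx ↦
      (hf x hx).differentiableAt.derivWithin (hs x hx) ▸ derivWithin_mem_of_forall_sub_mem hW hfW x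
    rcases n.eq_zero_or_pos with rfl | hn
    · simpa using hderiv
    · rw [iteratedDeriv_succ']
      exact ih hf.deriv (c := 0) (by simpa using hderiv) hn

variable [CharZero 𝕜] [CompleteSpace F]

theorem AnalyticAt.eventuallyEq_zero_of_iteratedDeriv_eq_zero {f : 𝕜 → F} {x : 𝕜}
    (hf : AnalyticAt 𝕜 f x) (h : ∀ k, iteratedDeriv k f x = 0) : f =ᶠ[𝓝 x] 0 := by
  refine analyticOrderAt_eq_top.1 (ENat.eq_top_iff_forall_ge.2 fun n ↦ ?_)
  exact (natCast_le_analyticOrderAt_iff_iteratedDeriv_eq_zero hf).2 fun i _ ↦ h i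

theorem AnalyticOnNhd.eqOn_const_of_iteratedDeriv_eq_zero {f : 𝕜 → F} {s : Set 𝕜}
    (hf : AnalyticOnNhd 𝕜 f s) (hs : IsPreconnected s) {x₀ : 𝕜} (hx₀ : x₀ ∈ s)
    (h : ∀ k, 0 < k → iteratedDeriv k f x₀ = 0) : EqOn f (fun _ ↦ f x₀) s := by
  have hg : AnalyticOnNhd 𝕜 (fun x ↦ f x₀ - f x) s := analyticOnNhd_const.sub hf
  have := hg.eqOn_zero_of_preconnected_of_eventuallyEq_zero hs hx₀ <|
    (hg x₀ hx₀).eventuallyEq_zero_of_iteratedDeriv_eq_zero fun k ↦ by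
      rcases k.eq_zero_or_pos with rfl | hk
      · simp
      · simp [iteratedDeriv_const_sub hk, h k hk]
  exact fun x hx ↦ (sub_eq_zero.1 (this hx)).symm

theorem AnalyticOnNhd.sub_mem_of_iteratedDeriv_mem {f : 𝕜 → F} {s : Set 𝕜}
    (hf : AnalyticOnNhd 𝕜 f s) (hs : IsPreconnected s) {x₀ : 𝕜} (hx₀ : x₀ ∈ s)
    {W : Submodule 𝕜 F} (hW : IsClosed (W : Set F)) (h : ∀ k, 0 < k → iteratedDeriv k f x₀ ∈ W) :
    ∀ x ∈ s, f x - f x₀ ∈ W := by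
  have := hW -- the instance making `F ⧸ W` a normed space
  have hπ := (W.mkQL.comp_analyticOnNhd hf).eqOn_const_of_iteratedDeriv_eq_zero hs hx₀ fun k hk ↦ by
    rw [W.mkQL.iteratedDeriv_comp_left (hf x₀ hx₀).contDiffAt le_top]
    exact (Submodule.Quotient.mk_eq_zero W).2 (h k hk)
  exact fun x hx ↦ (Submodule.Quotient.eq W).1 (hπ hx)

end

theorem analytic_derivative_span_constant_general
    (E : Type*) [NormedAddCommGroup E] [NormedSpace ℝ E] [FiniteDimensional ℝ E]
    (a b : ℝ) (hab : a < b)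
    (U : Set ℝ) (hIU : Set.Icc a b ⊆ U)
    (Υ : ℝ → E) (hΥ : AnalyticOnNhd ℝ Υ U)
    (Esp : ℝ → Submodule ℝ E)
    (hEsp : ∀ t, Esp t = Submodule.span ℝ {w : E | ∃ k : ℕ, 1 ≤ k ∧ w = iteratedDeriv k Υ t}) :
    (∀ s ∈ Set.Icc a b, ∀ t ∈ Set.Icc a b, Esp s = Esp t) ∧
    (∀ t₀ ∈ Set.Icc a b,
      (∀ t ∈ Set.Icc a b, Υ t - Υ t₀ ∈ Esp t₀) ∧
      (∀ E₀ : Submodule ℝ E, (∀ t ∈ Set.Icc a b, Υ t - Υ t₀ ∈ E₀) → Esp t₀ ≤ E₀)) := by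
  have hΥI : AnalyticOnNhd ℝ Υ (Icc a b) := hΥ.mono hIU
  have Esp_le_iff (t : ℝ) (W : Submodule ℝ E) :
      Esp t ≤ W ↔ ∀ k, 0 < k → iteratedDeriv k Υ t ∈ W := by
    rw [hEsp, Submodule.span_le]
    exact ⟨fun h k hk ↦ h ⟨k, hk, rfl⟩, by rintro h _ ⟨k, hk, rfl⟩; exact h k hk⟩
  have sub_mem_Esp : ∀ t₀ ∈ Icc a b, ∀ t ∈ Icc a b, Υ t - Υ t₀ ∈ Esp t₀ := fun t₀ ht₀ ↦
    hΥI.sub_mem_of_iteratedDeriv_mem isPreconnected_Icc ht₀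
      (Submodule.closed_of_finiteDimensional _) ((Esp_le_iff t₀ _).1 le_rfl)
  have Esp_le : ∀ (t₀ : ℝ) (E₀ : Submodule ℝ E), (∀ t ∈ Icc a b, Υ t - Υ t₀ ∈ E₀) →
      ∀ s ∈ Icc a b, Esp s ≤ E₀ := fun t₀ E₀ hE₀ s hs ↦ (Esp_le_iff s E₀).2 fun k hk ↦
    hΥI.iteratedDeriv_mem_of_forall_sub_mem (uniqueDiffOn_Icc hab)
      (Submodule.closed_of_finiteDimensional E₀) hE₀ hk s hs
  exact ⟨fun s hs t ht ↦ le_antisymm (Esp_le t _ (sub_mem_Esp t ht) s hs)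
      (Esp_le s _ (sub_mem_Esp s hs) t ht),
    fun t₀ ht₀ ↦ ⟨sub_mem_Esp t₀ ht₀, fun E₀ hE₀ ↦ Esp_le t₀ E₀ hE₀ t₀ ht₀⟩⟩

/-- §2.1 of the paper: for a real-analytic map `Υ : I → E` on a compact interval `I = [a,b]`,
the span `E_t` of all derivatives `Υ^{(k)}(t)`, `k ≥ 1`, is the same subspace for all
`t ∈ I`, and it equals the smallest subspace `E₀` with `Υ(I) ⊆ Υ(t₀) + E₀`. -/
theorem analytic_derivative_span_constant
    (E : Type*) [NormedAddCommGroup E] [NormedSpace ℝ E] [FiniteDimensional ℝ E]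
    (a b : ℝ) (hab : a < b)
    (U : Set ℝ) (hU : IsOpen U) (hIU : Set.Icc a b ⊆ U)
    (Υ : ℝ → E) (hΥ : AnalyticOnNhd ℝ Υ U)
    (Esp : ℝ → Submodule ℝ E)
    (hEsp : ∀ t, Esp t = Submodule.span ℝ {w : E | ∃ k : ℕ, 1 ≤ k ∧ w = iteratedDeriv k Υ t}) :
    (∀ s ∈ Set.Icc a b, ∀ t ∈ Set.Icc a b, Esp s = Esp t) ∧
    (∀ t₀ ∈ Set.Icc a b,
      (∀ t ∈ Set.Icc a b, Υ t - Υ t₀ ∈ Esp t₀) ∧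
      (∀ E₀ : Submodule ℝ E, (∀ t ∈ Set.Icc a b, Υ t - Υ t₀ ∈ E₀) → Esp t₀ ≤ E₀)) :=
  analytic_derivative_span_constant_general E a b hab U hIU Υ hΥ Esp hEsp
end

section
/- Let $G$ be a topological group acting continuously on a topological space $X$, let $\Gamma \leq G$ be a subgroup, and let $p \in X$ be a point whose $G$-orbit map $g \mapsto g \cdot p$ is continuous and whose orbit $\Gamma \cdot p$ is discrete and closed in $X$. Suppose $H = \mathrm{Stab}_G(p)$. Then the map $\rho \colon G/(H \cap \Gamma) \to (G/\Gamma) \times X$ defined by $\rho(g(H\cap\Gamma)) = (g\Gamma, g \cdot p)$ is a proper map, provided $G/\Gamma$ has the quotient topology, $(\mathrm{N}_G(H) \cap \Gamma)/(H \cap \Gamma)$ is finite, and the orbit map $G/H \to G\cdot p$ is proper. -/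
/-!
Lift an ultrafilter `𝒰` on `G/(H ⊓ Γ)` whose image converges to `(aΓ, x)` to pairs `(g, γ)` with
`g(H ⊓ Γ)` following `𝒰` and `gγ → a`. Then `γ⁻¹ • p = (gγ)⁻¹ • g • p → a⁻¹ • x`; as `Γ • p` is
closed and discrete, eventually `γ⁻¹ • p = γ₁ • p` for one `γ₁ ∈ Γ`, i.e. `γγ₁ ∈ H ⊓ Γ`, so
`g(H ⊓ Γ) = gγγ₁(H ⊓ Γ) → aγ₁(H ⊓ Γ)`.
-/

open Filter Topology

theorem IsDiscrete.eventually_eq_of_tendsto_of_isClosed {X β : Type*} [TopologicalSpace X]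
    {S : Set X} (hd : IsDiscrete S) (hS : IsClosed S) {l : Filter β} [l.NeBot] {u : β → X}
    {x : X} (hu : ∀ b, u b ∈ S) (h : Tendsto u l (𝓝 x)) : x ∈ S ∧ ∀ᶠ b in l, u b = x := by
  have hx : x ∈ S := hS.mem_of_tendsto h (.of_forall hu)
  have hwithin : Tendsto u l (𝓝[S] x) := tendsto_nhdsWithin_iff.mpr ⟨h, .of_forall hu⟩
  rw [hd.nhdsWithin x hx, tendsto_pure] at hwithin
  exact ⟨hx, hwithin⟩

theorem Ultrafilter.le_of_tendsto {α β : Type*} {f : α → β} {𝒲 : Ultrafilter α}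
    {𝒰 : Ultrafilter β} {l : Filter β} (h𝒰 : Tendsto f 𝒲 𝒰) (hl : Tendsto f 𝒲 l) :
    (𝒰 : Filter β) ≤ l := by
  have h : 𝒲.map f = 𝒰 := Ultrafilter.coe_le_coe.mp (by rwa [Ultrafilter.coe_map])
  rw [← h, Ultrafilter.coe_map]
  exact hl

theorem QuotientGroup.exists_ultrafilter_tendsto_mul {G : Type*} [Group G] [TopologicalSpace G]
    [SeparatelyContinuousMul G] {Γ : Subgroup G} {l : Filter G} [l.NeBot] {a : G}
    (h : Tendsto ((↑) : G → G ⧸ Γ) l (𝓝 (a : G ⧸ Γ))) :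
    ∃ 𝒲 : Ultrafilter (G × Γ),
      Tendsto Prod.fst (𝒲 : Filter (G × Γ)) l ∧
        Tendsto (fun z : G × Γ => z.1 * (z.2 : G)) 𝒲 (𝓝 a) := by
  set ℱ : Filter (G × Γ) := comap Prod.fst l ⊓ comap (fun z : G × Γ => z.1 * (z.2 : G)) (𝓝 a)
  suffices hne : ℱ.NeBot by
    have hle := Ultrafilter.of_le ℱ
    exact ⟨_, tendsto_iff_comap.mpr (hle.trans inf_le_left),
      tendsto_iff_comap.mpr (hle.trans inf_le_right)⟩
  refine inf_neBot_iff.mpr fun s hs t ht => ?_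
  obtain ⟨s', hs', hss'⟩ := mem_comap.mp hs
  obtain ⟨U, hU, htU⟩ := mem_comap.mp ht
  have hmkU : ((↑) : G → G ⧸ Γ) ⁻¹' (((↑) : G → G ⧸ Γ) '' U) ∈ l := by
    apply h
    rw [QuotientGroup.nhds_eq]
    exact image_mem_map hU
  obtain ⟨g, hgs, u, huU, hgu⟩ := nonempty_of_mem (inter_mem hs' hmkU)
  have hγ : g⁻¹ * u ∈ Γ := QuotientGroup.eq.mp hgu.symm
  refine ⟨(g, ⟨g⁻¹ * u, hγ⟩), hss' hgs, htU ?_⟩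
  simpa using huU

theorem quotient_graph_map_proper_general
    (G : Type*) [Group G] [TopologicalSpace G] [IsTopologicalGroup G]
    (X : Type*) [TopologicalSpace X]
    [MulAction G X] [ContinuousSMul G X]
    (Γ : Subgroup G) (p : X)
    (hclosed : IsClosed (Set.range fun γ : Γ => (γ : G) • p))
    (hdisc : DiscreteTopology (Set.range fun γ : Γ => (γ : G) • p))
    (ρ : G ⧸ (MulAction.stabilizer G p ⊓ Γ) → (G ⧸ Γ) × X)
    (hρ : ∀ g : G, ρ (QuotientGroup.mk g) = (QuotientGroup.mk g, g • p)) :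
    IsProperMap ρ := by
  have hρmk : ρ ∘ QuotientGroup.mk = fun g : G => ((g : G ⧸ Γ), g • p) := funext hρ
  refine isProperMap_iff_ultrafilter.mpr ⟨?_, fun 𝒰 ⟨y, x⟩ hy => ?_⟩
  · rw [(QuotientGroup.isQuotientMap_mk _).continuous_iff, hρmk]
    fun_prop
  obtain ⟨a, rfl⟩ := QuotientGroup.mk_surjective y
  have := 𝒰.neBot.comap_of_surj (QuotientGroup.mk_surjective (s := MulAction.stabilizer G p ⊓ Γ))
  have hlift := hy.comp (tendsto_comap (f := ((↑) : G → G ⧸ (MulAction.stabilizer G p ⊓ Γ))))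
  rw [hρmk, nhds_prod_eq, tendsto_prod_iff'] at hlift
  obtain ⟨𝒲, hfst, hmul⟩ := QuotientGroup.exists_ultrafilter_tendsto_mul hlift.1
  have hinv_smul : Tendsto (fun z : G × Γ => (z.2 : G)⁻¹ • p) 𝒲 (𝓝 (a⁻¹ • x)) := by
    refine (hmul.inv.smul (hlift.2.comp hfst)).congr fun z => ?_
    simp [mul_smul]
  obtain ⟨⟨γ₁, hγ₁ : (γ₁ : G) • p = a⁻¹ • x⟩, hev⟩ :=
    (isDiscrete_iff_discreteTopology.mpr hdisc).eventually_eq_of_tendsto_of_isClosed hclosed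
      (fun z => ⟨z.2⁻¹, by simp⟩) hinv_smul
  have hlim : Tendsto (fun z : G × Γ => (z.1 : G ⧸ (MulAction.stabilizer G p ⊓ Γ))) 𝒲
      (𝓝 ↑(a * γ₁)) := by
    refine ((QuotientGroup.continuous_mk.comp (continuous_mul_const (γ₁ : G))).tendsto a |>.comp
      hmul).congr' (hev.mono fun z hz => (QuotientGroup.eq.mpr ?_).symm)
    have hstab : (z.2 : G) * γ₁ ∈ MulAction.stabilizer G p := by
      rw [MulAction.mem_stabilizer_iff, mul_smul, hγ₁, ← hz, smul_inv_smul]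
    simpa [mul_assoc] using Subgroup.mem_inf.mpr ⟨hstab, Γ.mul_mem z.2.2 γ₁.2⟩
  refine ⟨↑(a * γ₁), ?_, Ultrafilter.le_of_tendsto (tendsto_comap_iff.mp hfst) hlim⟩
  rw [hρ, QuotientGroup.mk_mul_of_mem a γ₁.2, mul_smul, hγ₁, smul_inv_smul]

/-- Abstract properness statement behind Proposition 4.8: if `p ∈ X` has discrete and
closed `Γ`-orbit, `H = Stab_G(p)`, `(N_G(H) ⊓ Γ)/(H ⊓ Γ)` is finite, and the orbit map
`G/H → G·p` is proper, then `ρ : G/(H ⊓ Γ) → (G/Γ) × X`, `g ↦ (gΓ, g·p)`, is proper. -/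
theorem quotient_graph_map_proper
    (G : Type*) [Group G] [TopologicalSpace G] [IsTopologicalGroup G]
    (X : Type*) [TopologicalSpace X]
    [MulAction G X] [ContinuousSMul G X]
    (Γ : Subgroup G) (p : X)
    (hclosed : IsClosed (Set.range fun γ : Γ => (γ : G) • p))
    (hdisc : DiscreteTopology (Set.range fun γ : Γ => (γ : G) • p))
    (hfin : Finite ((Subgroup.normalizer (MulAction.stabilizer G p : Set G) ⊓ Γ : Subgroup G)
      ⧸ ((MulAction.stabilizer G p ⊓ Γ).subgroupOf
          (Subgroup.normalizer (MulAction.stabilizer G p : Set G) ⊓ Γ))))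
    (horbit : IsProperMap (fun q : G ⧸ MulAction.stabilizer G p =>
      ((MulAction.orbitEquivQuotientStabilizer G p).symm q : X)))
    (ρ : G ⧸ (MulAction.stabilizer G p ⊓ Γ) → (G ⧸ Γ) × X)
    (hρ : ∀ g : G, ρ (QuotientGroup.mk g) = (QuotientGroup.mk g, g • p)) :
    IsProperMap ρ :=
  quotient_graph_map_proper_general G X Γ p hclosed hdisc ρ hρ
end

section
/- Let $J \subseteq \mathbb{R}$ be a compact interval, $(Y, d)$ a metric space, $\lambda_t$ ($t \in J$) a family of Borel probability measures on $Y$ depending weak-* continuously on $t$, and $f \colon Y \to \mathbb{R}$ bounded continuous. Suppose $\theta_i \colon J \to Y$ are measurable maps such that for every closed subinterval $J' \subseteq J$ with nonempty interior, $\lim_{i\to\infty} \frac{1}{|J'|}\int_{J'} f(\theta_i(t))\,dt = \frac{1}{|J'|}\int_{J'} \left(\int_Y f\,d\lambda_t\right) dt$. Further suppose $w_i \colon J \to \mathrm{Homeo}(Y)$ are maps converging uniformly (in a suitable sense) to $w \colon J \to \mathrm{Homeo}(Y)$, meaning $\sup_{t \in J} \sup_{y \in Y} |f(w_i(t)\cdot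 y) - f(w(t)\cdot y)| \to 0$ and $t \mapsto \int_Y f(w(t)\cdot y)\,d\lambda_t(y)$ is Riemann integrable. Then $\lim_{i\to\infty} \int_J f(w_i(t)\cdot\theta_i(t))\,dt = \int_J \left(\int_Y f(w(t)\cdot y)\,d\lambda_t(y)\right) dt$, provided additionally that for each fixed $t$, $f \circ (w(t)\cdot)$ can be uniformly approximated on the relevant sets. -/
/-!
Replacing `wᵢ` by `w` changes the integrals by at most `(b - a) · sup |f ∘ wᵢ - f ∘ w|`, so it
suffices to treat the jointly continuous test function `F (t, y) = f (w t y)`. The defect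
`∫_c^d F (t, θᵢ t) dt - ∫_c^d ∫ F (t, ·) dλ_t dt` is additive in `[c, d]`. On a short interval
near `t₀`, freezing `F` at `t₀` reduces it to the hypothesis on `θᵢ` for `F (t₀, ·)`, at the cost
of the `λ_t`-integral of `y ↦ sup_{|s - t₀| ≤ r} |F (s, y) - F (t₀, y)|`. Since `Y` need not be
compact this is not uniformly small in `y`, but its `λ_{t₀}`-integral is small by dominated
convergence, hence so is its `λ_t`-integral for `t` near `t₀` by weak continuity. A Lebesgue
number for these neighbourhoods lets the local bounds `ε (d - c)` add up over `[a, b]`.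
-/

open MeasureTheory Filter Topology BoundedContinuousFunction Set Metric

namespace BoundedContinuousFunction

section SliceDeviation

variable {X Y : Type*} [TopologicalSpace X] [TopologicalSpace Y]

noncomputable def sliceDiff (F : X × Y →ᵇ ℝ) (K : Set X) (x₀ : X) : C(Y, C(K, ℝ)) :=
  ContinuousMap.curry ⟨fun p : Y × K => F ((p.2 : X), p.1) - F (x₀, p.1), by fun_prop⟩

@[simp]
lemma sliceDiff_apply (F : X × Y →ᵇ ℝ) (K : Set X) (x₀ : X) (y : Y) (s : K) :
    F.sliceDiff K x₀ y s = F ((s : X), y) - F (x₀, y) :=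
  rfl

variable (F : X × Y →ᵇ ℝ) (K : Set X) [CompactSpace K] (x₀ : X)

lemma norm_sliceDiff_le (y : Y) : ‖F.sliceDiff K x₀ y‖ ≤ 2 * ‖F‖ := by
  refine (ContinuousMap.norm_le _ (by positivity)).2 fun s => ?_
  rw [sliceDiff_apply, two_mul]
  exact (norm_sub_le _ _).trans (add_le_add (F.norm_coe_le_norm _) (F.norm_coe_le_norm _))

/-- `y ↦ sup_{s ∈ K} |F (s, y) - F (x₀, y)|`. -/
noncomputable def sliceDeviation : Y →ᵇ ℝ :=
  ofNormedAddCommGroup (fun y => ‖F.sliceDiff K x₀ y‖)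
    (continuous_norm.comp (F.sliceDiff K x₀).continuous) (2 * ‖F‖)
    fun y => by simpa only [norm_norm] using F.norm_sliceDiff_le K x₀ y

@[simp]
lemma sliceDeviation_apply (y : Y) : F.sliceDeviation K x₀ y = ‖F.sliceDiff K x₀ y‖ :=
  rfl

lemma sliceDeviation_nonneg (y : Y) : 0 ≤ F.sliceDeviation K x₀ y := by
  simp

lemma norm_sliceDeviation_le (y : Y) : ‖F.sliceDeviation K x₀ y‖ ≤ 2 * ‖F‖ := by
  simpa using F.norm_sliceDiff_le K x₀ y

variable {F K x₀}

lemma abs_sub_le_sliceDeviation {s : X} (hs : s ∈ K) (y : Y) :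
    |F (s, y) - F (x₀, y)| ≤ F.sliceDeviation K x₀ y := by
  simpa using (F.sliceDiff K x₀ y).norm_coe_le_norm ⟨s, hs⟩

lemma sliceDeviation_le {y : Y} {C : ℝ} (hC : 0 ≤ C)
    (h : ∀ s ∈ K, |F (s, y) - F (x₀, y)| ≤ C) : F.sliceDeviation K x₀ y ≤ C :=
  (ContinuousMap.norm_le _ hC).2 fun s => by simpa using h s s.2

end SliceDeviation

section ProperSpace

variable {X Y : Type*} [PseudoMetricSpace X] [ProperSpace X] [TopologicalSpace Y]

lemma tendsto_sliceDeviation_closedBall (F : X × Y →ᵇ ℝ) (x₀ : X) (y : Y) :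
    Tendsto (fun r => F.sliceDeviation (closedBall x₀ r) x₀ y) (𝓝 0) (𝓝 0) := by
  have hcont : ContinuousAt (fun s => F (s, y)) x₀ := by fun_prop
  rw [Metric.tendsto_nhds]
  intro ε hε
  obtain ⟨δ, hδ, hF⟩ := Metric.continuousAt_iff.1 hcont (ε / 2) (half_pos hε)
  filter_upwards [ball_mem_nhds 0 hδ] with r hr
  rw [Real.dist_eq, sub_zero, abs_of_nonneg (sliceDeviation_nonneg _ _ _ _)]
  refine (sliceDeviation_le (half_pos hε).le fun s hs => ?_).trans_lt (half_lt_self hε)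
  have hr' : r < δ := (le_abs_self r).trans_lt (by simpa using hr)
  exact (hF ((mem_closedBall.1 hs).trans_lt hr')).le

lemma tendsto_integral_sliceDeviation_closedBall [MeasurableSpace Y] [OpensMeasurableSpace Y]
    (F : X × Y →ᵇ ℝ) (x₀ : X) (μ : Measure Y) [IsFiniteMeasure μ] :
    Tendsto (fun r => ∫ y, F.sliceDeviation (closedBall x₀ r) x₀ y ∂μ) (𝓝 0) (𝓝 0) := by
  simpa using tendsto_integral_filter_of_dominated_convergence (fun _ => 2 * ‖F‖)
    (.of_forall fun r => (F.sliceDeviation _ x₀).continuous.aestronglyMeasurable)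
    (.of_forall fun r => ae_of_all _ (F.norm_sliceDeviation_le _ x₀)) (integrable_const _)
    (ae_of_all _ (F.tendsto_sliceDeviation_closedBall x₀))

end ProperSpace

lemma intervalIntegrable_comp {Z : Type*} [TopologicalSpace Z] [MeasurableSpace Z]
    [OpensMeasurableSpace Z] (g : Z →ᵇ ℝ) {γ : ℝ → Z} (hγ : Measurable γ) (c d : ℝ) :
    IntervalIntegrable (fun t => g (γ t)) volume c d :=
  (intervalIntegrable_const (c := ‖g‖)).mono_fun
    (g.continuous.measurable.comp hγ).aestronglyMeasurable
    (ae_of_all _ fun t => by simpa using g.norm_coe_le_norm (γ t))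

end BoundedContinuousFunction

theorem exists_pos_of_forall_Icc_subset_ball {P : ℝ → ℝ → Prop} {a b : ℝ}
    (h : ∀ t ∈ Icc a b, ∃ r > 0, ∀ c d, a ≤ c → c ≤ d → d ≤ b → Icc c d ⊆ ball t r → P c d) :
    ∃ δ > 0, ∀ c d, a ≤ c → c ≤ d → d ≤ b → d - c < δ → P c d := by
  choose! r hr hP using h
  obtain ⟨δ, hδ, hcover⟩ :=
    lebesgue_number_lemma_of_metric (c := fun t : Icc a b => ball (t : ℝ) (r t)) isCompact_Icc
      (fun _ => isOpen_ball) fun t ht => mem_iUnion.2 ⟨⟨t, ht⟩, mem_ball_self (hr t ht)⟩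
  refine ⟨δ, hδ, fun c d hac hcd hdb hlt => ?_⟩
  obtain ⟨t, ht⟩ := hcover c ⟨hac, hcd.trans hdb⟩
  refine hP t t.2 c d hac hcd hdb (Subset.trans (fun s hs => ?_) ht)
  rw [mem_ball, Real.dist_eq, abs_lt]
  constructor <;> linarith [hs.1, hs.2]

theorem eventually_abs_le_mul_of_additive {ι : Type*} {l : Filter ι} {E : ι → ℝ → ℝ → ℝ}
    {a b ε δ : ℝ} (hab : a ≤ b) (hδ : 0 < δ)
    (hadd : ∀ i c d e, a ≤ c → c ≤ d → d ≤ e → e ≤ b → E i c e = E i c d + E i d e)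
    (hsmall : ∀ c d, a ≤ c → c ≤ d → d ≤ b → d - c < δ → ∀ᶠ i in l, |E i c d| ≤ ε * (d - c)) :
    ∀ᶠ i in l, |E i a b| ≤ ε * (b - a) := by
  have hsteps : ∀ n : ℕ, ∀ c d, a ≤ c → c ≤ d → d ≤ b → d - c ≤ n * (δ / 2) →
      ∀ᶠ i in l, |E i c d| ≤ ε * (d - c) := by
    intro n
    induction n with
    | zero =>
      intro c d hac hcd hdb hn
      exact hsmall c d hac hcd hdb (by push_cast at hn; linarith)
    | succ n ih =>
      intro c d hac hcd hdb hn
      rcases lt_or_ge (d - c) δ with hlt | hge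
      · exact hsmall c d hac hcd hdb hlt
      obtain ⟨e, he⟩ : ∃ e, e = c + δ / 2 := ⟨_, rfl⟩
      push_cast at hn
      filter_upwards [hsmall c e hac (by linarith) (by linarith) (by linarith),
        ih e d (by linarith) (by linarith) hdb (by linarith)] with i hce hed
      rw [hadd i c e d hac (by linarith) (by linarith) hdb]
      calc |E i c e + E i e d| ≤ |E i c e| + |E i e d| := abs_add_le _ _
        _ ≤ ε * (e - c) + ε * (d - e) := add_le_add hce hed
        _ = ε * (d - c) := by ring
  obtain ⟨n, hn⟩ := exists_nat_ge ((b - a) / (δ / 2))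
  exact hsteps n a b le_rfl hab le_rfl (by rwa [div_le_iff₀ (half_pos hδ)] at hn)

theorem tendsto_zero_of_additive_of_locally_small {ι : Type*} {l : Filter ι}
    {E : ι → ℝ → ℝ → ℝ} {a b : ℝ} (hab : a ≤ b)
    (hadd : ∀ i c d e, a ≤ c → c ≤ d → d ≤ e → e ≤ b → E i c e = E i c d + E i d e)
    (hloc : ∀ t ∈ Icc a b, ∀ ε > 0, ∃ r > 0, ∀ c d, a ≤ c → c ≤ d → d ≤ b →
      Icc c d ⊆ ball t r → ∀ᶠ i in l, |E i c d| ≤ ε * (d - c)) :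
    Tendsto (fun i => E i a b) l (𝓝 0) := by
  rw [Metric.tendsto_nhds]
  intro ε hε
  have hε' : 0 < ε / (b - a + 1) := div_pos hε (by linarith)
  obtain ⟨δ, hδ, hsmall⟩ := exists_pos_of_forall_Icc_subset_ball fun t ht => hloc t ht _ hε'
  filter_upwards [eventually_abs_le_mul_of_additive hab hδ hadd hsmall] with i hi
  rw [Real.dist_eq, sub_zero]
  calc |E i a b| ≤ ε / (b - a + 1) * (b - a) := hi
    _ < ε := by rw [div_mul_eq_mul_div, div_lt_iff₀ (by linarith)]; nlinarith

lemma abs_integral_sub_le_integral {α : Type*} [MeasurableSpace α] {μ : Measure α}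
    {f g D : α → ℝ} (hf : Integrable f μ) (hg : Integrable g μ) (hD : Integrable D μ)
    (h : ∀ x, |f x - g x| ≤ D x) : |∫ x, f x ∂μ - ∫ x, g x ∂μ| ≤ ∫ x, D x ∂μ := by
  rw [← integral_sub hf hg]
  exact norm_integral_le_of_norm_le hD
    (ae_of_all _ fun x => (Real.norm_eq_abs _).trans_le (h x))

lemma abs_intervalIntegral_sub_le_integral {f g D : ℝ → ℝ} {c d : ℝ} (hcd : c ≤ d)
    (hf : IntervalIntegrable f volume c d) (hg : IntervalIntegrable g volume c d)
    (hD : IntervalIntegrable D volume c d) (h : ∀ t ∈ Icc c d, |f t - g t| ≤ D t) :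
    |(∫ t in c..d, f t) - ∫ t in c..d, g t| ≤ ∫ t in c..d, D t := by
  rw [← intervalIntegral.integral_sub hf hg]
  exact intervalIntegral.norm_integral_le_of_norm_le hcd
    (ae_of_all _ fun t ht => (Real.norm_eq_abs _).trans_le (h t (Ioc_subset_Icc_self ht))) hD

lemma IntervalIntegrable.mono_set_of_le {f : ℝ → ℝ} {μ : Measure ℝ} {a b c d : ℝ}
    (hf : IntervalIntegrable f μ a b) (hac : a ≤ c) (hcd : c ≤ d) (hdb : d ≤ b) :
    IntervalIntegrable f μ c d :=
  hf.mono_set <| by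
    rw [uIcc_of_le hcd, uIcc_of_le (hac.trans (hcd.trans hdb))]
    exact Icc_subset_Icc hac hdb

section Equidistribution

variable {Y : Type*} [TopologicalSpace Y] [MeasurableSpace Y]

noncomputable def graphDefect (lam : ℝ → Measure Y) (θ : ℝ → Y) (F : ℝ × Y →ᵇ ℝ) (c d : ℝ) :
    ℝ :=
  (∫ t in c..d, F (t, θ t)) - ∫ t in c..d, ∫ y, F (t, y) ∂lam t

variable [OpensMeasurableSpace Y] {lam : ℝ → Measure Y} {θ : ℝ → Y} {F : ℝ × Y →ᵇ ℝ}

lemma graphDefect_add {c d e : ℝ} (hθ : Measurable θ)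
    (hcd : IntervalIntegrable (fun t => ∫ y, F (t, y) ∂lam t) volume c d)
    (hde : IntervalIntegrable (fun t => ∫ y, F (t, y) ∂lam t) volume d e) :
    graphDefect lam θ F c e = graphDefect lam θ F c d + graphDefect lam θ F d e := by
  have hgraph : Measurable fun t => (t, θ t) := measurable_id.prodMk hθ
  rw [graphDefect, graphDefect, graphDefect,
    ← intervalIntegral.integral_add_adjacent_intervals (F.intervalIntegrable_comp hgraph c d)
      (F.intervalIntegrable_comp hgraph d e),
    ← intervalIntegral.integral_add_adjacent_intervals hcd hde]
  ring

lemma abs_graphDefect_le {c d : ℝ} (hcd : c ≤ d) (hθ : Measurable θ)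
    (hfin : ∀ t ∈ Icc c d, IsFiniteMeasure (lam t))
    (hF : IntervalIntegrable (fun t => ∫ y, F (t, y) ∂lam t) volume c d) {g D : Y →ᵇ ℝ}
    (hg : IntervalIntegrable (fun t => ∫ y, g y ∂lam t) volume c d)
    (hD : IntervalIntegrable (fun t => ∫ y, D y ∂lam t) volume c d)
    (hgD : ∀ t ∈ Icc c d, ∀ y, |F (t, y) - g y| ≤ D y) :
    |graphDefect lam θ F c d| ≤ |(∫ t in c..d, g (θ t)) - ∫ t in c..d, ∫ y, g y ∂lam t| +
      ((∫ t in c..d, D (θ t)) + ∫ t in c..d, ∫ y, D y ∂lam t) := by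
  have halong : |(∫ t in c..d, F (t, θ t)) - ∫ t in c..d, g (θ t)| ≤ ∫ t in c..d, D (θ t) :=
    abs_intervalIntegral_sub_le_integral hcd
      (F.intervalIntegrable_comp (measurable_id.prodMk hθ) c d) (g.intervalIntegrable_comp hθ c d)
      (D.intervalIntegrable_comp hθ c d) fun t ht => hgD t ht (θ t)
  have haverage : |(∫ t in c..d, ∫ y, g y ∂lam t) - ∫ t in c..d, ∫ y, F (t, y) ∂lam t| ≤
      ∫ t in c..d, ∫ y, D y ∂lam t :=
    abs_intervalIntegral_sub_le_integral hcd hg hF hD fun t ht => by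
      have := hfin t ht
      exact abs_integral_sub_le_integral (g.integrable _)
        ((F.compContinuous ⟨(t, ·), by fun_prop⟩).integrable _) (D.integrable _)
        fun y => abs_sub_comm (F (t, y)) (g y) ▸ hgD t ht y
  set frozen := (∫ t in c..d, g (θ t)) - ∫ t in c..d, ∫ y, g y ∂lam t
  rw [graphDefect]
  rw [abs_le] at halong haverage ⊢
  constructor <;> linarith [le_abs_self frozen, neg_abs_le frozen]

variable {ι : Type*} {l : Filter ι} {θ : ι → ℝ → Y} {a b : ℝ}
  (hfin : ∀ t ∈ Icc a b, IsFiniteMeasure (lam t))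
  (hweakcont : ∀ g : Y →ᵇ ℝ, ContinuousOn (fun t => ∫ y, g y ∂lam t) (Icc a b))
  (hθmeas : ∀ i, Measurable (θ i))
  (hθ : ∀ g : Y →ᵇ ℝ, ∀ c d, a ≤ c → c ≤ d → d ≤ b →
    Tendsto (fun i => ∫ t in c..d, g (θ i t)) l (𝓝 (∫ t in c..d, ∫ y, g y ∂lam t)))
  (hF : IntervalIntegrable (fun t => ∫ y, F (t, y) ∂lam t) volume a b)
include hfin hweakcont hθmeas hθ hF

lemma exists_pos_eventually_abs_graphDefect_le {t₀ : ℝ} (ht₀ : t₀ ∈ Icc a b) {ε : ℝ}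
    (hε : 0 < ε) : ∃ r > 0, ∀ c d, a ≤ c → c ≤ d → d ≤ b → Icc c d ⊆ ball t₀ r →
      ∀ᶠ i in l, |graphDefect lam (θ i) F c d| ≤ ε * (d - c) := by
  have := hfin t₀ ht₀
  obtain ⟨r₀, hr₀small, hr₀⟩ : ∃ r₀,
      ∫ y, F.sliceDeviation (closedBall t₀ r₀) t₀ y ∂lam t₀ < ε / 4 ∧ 0 < r₀ :=
    ((((F.tendsto_integral_sliceDeviation_closedBall t₀ (lam t₀)).mono_left
      (nhdsWithin_le_nhds (s := Ioi 0))).eventually (gt_mem_nhds (by positivity))).and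
        self_mem_nhdsWithin).exists
  set D := F.sliceDeviation (closedBall t₀ r₀) t₀
  obtain ⟨r₁, hr₁, hDsmall⟩ : ∃ r₁ > 0, ∀ ⦃t⦄, dist t t₀ < r₁ → t ∈ Icc a b →
      ∫ y, D y ∂lam t < ε / 4 :=
    Metric.eventually_nhds_iff.1 <| eventually_nhdsWithin_iff.1 <|
      (hweakcont D t₀ ht₀).eventually (gt_mem_nhds hr₀small)
  refine ⟨min r₀ r₁, lt_min hr₀ hr₁, fun c d hac hcd hdb hball => ?_⟩
  rcases hcd.eq_or_lt with rfl | hcd'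
  · simp [graphDefect]
  have hIcc : Icc c d ⊆ Icc a b := Icc_subset_Icc hac hdb
  have hint : ∀ h : Y →ᵇ ℝ, IntervalIntegrable (fun t => ∫ y, h y ∂lam t) volume c d :=
    fun h => ((hweakcont h).mono hIcc).intervalIntegrable_of_Icc hcd
  set g : Y →ᵇ ℝ := F.compContinuous ⟨(t₀, ·), by fun_prop⟩
  have hgD : ∀ t ∈ Icc c d, ∀ y, |F (t, y) - g y| ≤ D y := fun t ht =>
    abs_sub_le_sliceDeviation
      (ball_subset_closedBall (ball_subset_ball (min_le_left _ _) (hball ht)))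
  have hDint : ∫ t in c..d, ∫ y, D y ∂lam t ≤ ε / 4 * (d - c) := by
    calc ∫ t in c..d, ∫ y, D y ∂lam t ≤ ∫ _ in c..d, ε / 4 :=
          intervalIntegral.integral_mono_on hcd (hint D) intervalIntegrable_const fun t ht =>
            (hDsmall ((mem_ball.1 (hball ht)).trans_le (min_le_right _ _)) (hIcc ht)).le
      _ = ε / 4 * (d - c) := by rw [intervalIntegral.integral_const, smul_eq_mul, mul_comm]
  have hlim : Tendsto (fun i => |(∫ t in c..d, g (θ i t)) - ∫ t in c..d, ∫ y, g y ∂lam t| +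
      ∫ t in c..d, D (θ i t)) l (𝓝 (0 + ∫ t in c..d, ∫ y, D y ∂lam t)) := by
    simpa using (tendsto_sub_nhds_zero_iff.2 (hθ g c d hac hcd hdb)).abs.add
      (hθ D c d hac hcd hdb)
  have hlt : 0 + ∫ t in c..d, ∫ y, D y ∂lam t < ε / 2 * (d - c) := by nlinarith
  filter_upwards [hlim.eventually (gt_mem_nhds hlt)] with i hi
  have hdefect := abs_graphDefect_le hcd (hθmeas i) (fun t ht => hfin t (hIcc ht))
    (hF.mono_set_of_le hac hcd hdb) (hint g) (hint D) hgD
  nlinarith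

theorem tendsto_intervalIntegral_apply_graph (hab : a ≤ b) :
    Tendsto (fun i => ∫ t in a..b, F (t, θ i t)) l (𝓝 (∫ t in a..b, ∫ y, F (t, y) ∂lam t)) := by
  rw [← tendsto_sub_nhds_zero_iff]
  exact tendsto_zero_of_additive_of_locally_small (E := fun i => graphDefect lam (θ i) F) hab
    (fun i c d e hac hcd hde heb => graphDefect_add (hθmeas i)
      (hF.mono_set_of_le hac hcd (hde.trans heb)) (hF.mono_set_of_le (hac.trans hcd) hde heb))
    fun t ht ε hε => exists_pos_eventually_abs_graphDefect_le hfin hweakcont hθmeas hθ hF ht hε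

end Equidistribution

lemma tendsto_dist_intervalIntegral_of_forall_abs_sub_le {ι : Type*} {l : Filter ι}
    {u v : ι → ℝ → ℝ} {a b : ℝ} (hu : ∀ i, IntervalIntegrable (u i) volume a b)
    (hv : ∀ i, IntervalIntegrable (v i) volume a b)
    (h : ∀ ε > 0, ∀ᶠ i in l, ∀ t ∈ uIcc a b, |u i t - v i t| ≤ ε) :
    Tendsto (fun i => dist (∫ t in a..b, u i t) (∫ t in a..b, v i t)) l (𝓝 0) := by
  rw [Metric.tendsto_nhds]
  intro ε hε
  filter_upwards [h (ε / (|b - a| + 1)) (by positivity)] with i hi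
  rw [dist_zero_right, Real.norm_of_nonneg dist_nonneg, dist_eq_norm,
    ← intervalIntegral.integral_sub (hu i) (hv i)]
  calc ‖∫ t in a..b, u i t - v i t‖ ≤ ε / (|b - a| + 1) * |b - a| :=
        intervalIntegral.norm_integral_le_of_norm_le_const fun t ht =>
          (Real.norm_eq_abs _).trans_le (hi t (uIoc_subset_uIcc ht))
    _ < ε := by
      rw [div_mul_eq_mul_div, div_lt_iff₀ (by positivity)]
      nlinarith [abs_nonneg (b - a)]

/-- Abstract version of Lemma 5.1: if on every subinterval the curves `θᵢ` equidistribute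
(for every bounded continuous test function) towards the family of measures `λ t`, and
`wᵢ → w` uniformly (as perturbations by homeomorphisms), then the perturbed curves
`t ↦ wᵢ(t)·θᵢ(t)` equidistribute towards `t ↦ (w t)_* λ t`. -/
theorem perturbed_equidistribution
    (Y : Type*) [MetricSpace Y] [MeasurableSpace Y] [BorelSpace Y]
    (a b : ℝ) (hab : a < b)
    (lam : ℝ → Measure Y) (hprob : ∀ t ∈ Set.Icc a b, IsProbabilityMeasure (lam t))
    (hweakcont : ∀ g : Y →ᵇ ℝ, ContinuousOn (fun t => ∫ y, g y ∂(lam t)) (Set.Icc a b))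
    (f : Y →ᵇ ℝ)
    (θ : ℕ → ℝ → Y) (hθmeas : ∀ i, Measurable (θ i))
    -- equidistribution along every closed subinterval with nonempty interior
    (hθ : ∀ g : Y →ᵇ ℝ, ∀ c d : ℝ, a ≤ c → c < d → d ≤ b →
      Tendsto (fun i => ∫ t in Set.Icc c d, g (θ i t)) atTop
        (𝓝 (∫ t in Set.Icc c d, ∫ y, g y ∂(lam t))))
    (w : ℕ → ℝ → Y ≃ₜ Y) (wlim : ℝ → Y ≃ₜ Y)
    (hwcont : ∀ i, Continuous fun p : ℝ × Y => (w i p.1) p.2)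
    (hwlimcont : Continuous fun p : ℝ × Y => (wlim p.1) p.2)
    -- uniform convergence of `f ∘ wᵢ` to `f ∘ w`
    (hunif : ∀ ε : ℝ, 0 < ε → ∃ N : ℕ, ∀ i ≥ N, ∀ t ∈ Set.Icc a b, ∀ y : Y,
      |f ((w i t) y) - f ((wlim t) y)| ≤ ε)
    -- integrability of the limiting profile
    (hint : IntervalIntegrable (fun t => ∫ y, f ((wlim t) y) ∂(lam t)) volume a b) :
    Tendsto (fun i => ∫ t in Set.Icc a b, f ((w i t) (θ i t))) atTop
      (𝓝 (∫ t in Set.Icc a b, ∫ y, f ((wlim t) y) ∂(lam t))) := by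
  have hθ' : ∀ g : Y →ᵇ ℝ, ∀ c d, a ≤ c → c ≤ d → d ≤ b →
      Tendsto (fun i => ∫ t in c..d, g (θ i t)) atTop (𝓝 (∫ t in c..d, ∫ y, g y ∂lam t)) := by
    intro g c d hac hcd hdb
    rcases hcd.eq_or_lt with rfl | hcd'
    · simp
    simpa only [intervalIntegral.integral_of_le hcd, integral_Icc_eq_integral_Ioc] using
      hθ g c d hac hcd' hdb
  let F : ℝ × Y →ᵇ ℝ := f.compContinuous ⟨fun p => wlim p.1 p.2, hwlimcont⟩
  have hgraph := tendsto_intervalIntegral_apply_graph (F := F)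
    (fun t ht => have := hprob t ht; inferInstance) hweakcont hθmeas hθ' hint hab.le
  simp only [integral_Icc_eq_integral_Ioc, ← intervalIntegral.integral_of_le hab.le]
  refine hgraph.congr_dist (tendsto_dist_intervalIntegral_of_forall_abs_sub_le
    (fun i => F.intervalIntegrable_comp (measurable_id.prodMk (hθmeas i)) a b)
    (fun i => f.intervalIntegrable_comp
      ((hwcont i).measurable.comp (measurable_id.prodMk (hθmeas i))) a b)
    fun ε hε => ?_)
  rw [uIcc_of_le hab.le]
  filter_upwards [eventually_atTop.2 (hunif ε hε)] with i hi t ht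
  rw [abs_sub_comm]
  exact hi t ht (θ i t)
end

section
/- Let $I = [a,b]$ with $a < b$, let $f \colon X \to \mathbb{R}$ be a bounded uniformly continuous function on a metric space $X$ on which a one-parameter group $\{u(s)\}_{s\in\mathbb{R}}$ acts by uniformly continuous transformations, and let $\lambda_i$ be probability measures on $X$ of the form $\int f\,d\lambda_i = \frac{1}{|I|}\int_I f(\Psi_i(t))\,dt$ for measurable $\Psi_i \colon I \to X$. Fix $s_0 \in \mathbb{R}$ and suppose there are $\xi_i \to 0$ and a sequence $\epsilon_i \to 0$ such that $\sup_{t \in [a, b-\xi_i]} |f(\Psi_i(t + \xi_i)) - f(u(s_0)\Psi_i(t))| \leq \epsilon_i$. If $\lambda_i \to \lambda$ weak-*, then $\int_X f(u(s_0) y)\,d\lambda(y) = \int_X f(y)\,d\lambda(y)$. -/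
open MeasureTheory Filter Topology
open scoped BoundedContinuousFunction

/-!
Write `g = f ∘ u s₀`. By the definition of `μᵢ`, `∫ g dμᵢ - ∫ f dμᵢ` is `1/(b - a)` times
`∫_a^b f(u s₀ Ψᵢ t) dt - ∫_a^b f(Ψᵢ t) dt`. Substituting `t ↦ t + ξᵢ` in the second integral, the
two integrands differ by at most `εᵢ` on `[a, b - ξᵢ]`, and what is left are two intervals of
length `ξᵢ` on which the integrands are bounded by `‖f‖`. So the difference is
`O(ξᵢ ‖f‖ + εᵢ) → 0`, while by weak-* convergence it tends to `∫ g dμ - ∫ f dμ`.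
-/

theorem BoundedContinuousFunction.intervalIntegrable_comp_s14 {X : Type*} [TopologicalSpace X]
    [MeasurableSpace X] [OpensMeasurableSpace X] (f : X →ᵇ ℝ) {ψ : ℝ → X} (hψ : Measurable ψ)
    (a b : ℝ) : IntervalIntegrable (fun t => f (ψ t)) volume a b :=
  (intervalIntegrable_const (c := ‖f‖)).mono_fun
    (f.continuous.measurable.comp hψ).aestronglyMeasurable
    (ae_of_all _ fun t => (f.norm_coe_le_norm (ψ t)).trans (le_abs_self _))

section Shift

variable {E : Type*} [NormedAddCommGroup E] [NormedSpace ℝ E] {F G : ℝ → E} {a b ξ M ε : ℝ}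

theorem intervalIntegral.integral_sub_integral_eq_of_shift (hF : IntervalIntegrable F volume a b)
    (hG : IntervalIntegrable G volume a b) (hξ0 : 0 ≤ ξ) (hξ : ξ ≤ b - a) :
    (∫ t in a..b, G t) - ∫ t in a..b, F t =
      (∫ t in a..b - ξ, G t - F (t + ξ)) + (∫ t in b - ξ..b, G t) - ∫ t in a..a + ξ, F t := by
  have hFa : IntervalIntegrable F volume a (a + ξ) :=
    hF.mono_set (Set.uIcc_subset_uIcc_left (Set.mem_uIcc_of_le (by linarith) (by linarith)))
  have hFb : IntervalIntegrable F volume (a + ξ) b :=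
    hF.mono_set (Set.uIcc_subset_uIcc_right (Set.mem_uIcc_of_le (by linarith) (by linarith)))
  have hGa : IntervalIntegrable G volume a (b - ξ) :=
    hG.mono_set (Set.uIcc_subset_uIcc_left (Set.mem_uIcc_of_le (by linarith) (by linarith)))
  have hGb : IntervalIntegrable G volume (b - ξ) b :=
    hG.mono_set (Set.uIcc_subset_uIcc_right (Set.mem_uIcc_of_le (by linarith) (by linarith)))
  have hFshift : IntervalIntegrable (fun t => F (t + ξ)) volume a (b - ξ) := by
    simpa using hFb.comp_add_right ξ
  rw [intervalIntegral.integral_sub hGa hFshift, intervalIntegral.integral_comp_add_right,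
    ← intervalIntegral.integral_add_adjacent_intervals hGa hGb,
    ← intervalIntegral.integral_add_adjacent_intervals hFa hFb, sub_add_cancel]
  abel

theorem intervalIntegral.norm_integral_sub_integral_le_of_shift
    (hF : IntervalIntegrable F volume a b) (hG : IntervalIntegrable G volume a b)
    (hFM : ∀ t, ‖F t‖ ≤ M) (hGM : ∀ t, ‖G t‖ ≤ M) (hξ0 : 0 ≤ ξ) (hξ : ξ ≤ b - a)
    (happrox : ∀ t ∈ Set.Icc a (b - ξ), ‖F (t + ξ) - G t‖ ≤ ε) :
    ‖(∫ t in a..b, G t) - ∫ t in a..b, F t‖ ≤ 2 * ξ * M + (b - a) * ε := by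
  have hε : 0 ≤ ε := (norm_nonneg _).trans (happrox a ⟨le_rfl, by linarith⟩)
  have hbulk : ‖∫ t in a..b - ξ, G t - F (t + ξ)‖ ≤ ε * |b - ξ - a| :=
    intervalIntegral.norm_integral_le_of_norm_le_const fun t ht => by
      rw [Set.uIoc_of_le (by linarith)] at ht
      simpa only [norm_sub_rev] using happrox t ⟨ht.1.le, ht.2⟩
  have hright : ‖∫ t in b - ξ..b, G t‖ ≤ M * |b - (b - ξ)| :=
    intervalIntegral.norm_integral_le_of_norm_le_const fun t _ => hGM t
  have hleft : ‖∫ t in a..a + ξ, F t‖ ≤ M * |a + ξ - a| :=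
    intervalIntegral.norm_integral_le_of_norm_le_const fun t _ => hFM t
  rw [abs_of_nonneg (by linarith)] at hbulk
  rw [abs_of_nonneg (by linarith)] at hright hleft
  rw [integral_sub_integral_eq_of_shift hF hG hξ0 hξ]
  calc _ ≤ ‖∫ t in a..b - ξ, G t - F (t + ξ)‖ + ‖∫ t in b - ξ..b, G t‖
          + ‖∫ t in a..a + ξ, F t‖ := norm_sub_le_of_le (norm_add_le _ _) le_rfl
    _ ≤ 2 * ξ * M + (b - a) * ε := by nlinarith

end Shift

theorem eq_of_tendsto_of_norm_sub_le {α E : Type*} [NormedAddCommGroup E] {l : Filter α} [l.NeBot]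
    {x y : α → E} {c : α → ℝ} {p q : E} (hx : Tendsto x l (𝓝 p)) (hy : Tendsto y l (𝓝 q))
    (hc : Tendsto c l (𝓝 0)) (hxy : ∀ᶠ i in l, ‖x i - y i‖ ≤ c i) : p = q := by
  have : Tendsto (fun i => x i - y i + y i) l (𝓝 (0 + q)) := (squeeze_zero_norm' hxy hc).add hy
  exact tendsto_nhds_unique hx (by simpa using this)

theorem BoundedContinuousFunction.abs_setIntegral_Icc_comp_sub_le_of_shift {X : Type*}
    [TopologicalSpace X] [MeasurableSpace X] [OpensMeasurableSpace X] (f : X →ᵇ ℝ) (T : C(X, X))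
    {ψ : ℝ → X} (hψ : Measurable ψ) {a b ξ ε : ℝ} (hab : a ≤ b) (hξ0 : 0 ≤ ξ) (hξ : ξ ≤ b - a)
    (happrox : ∀ t ∈ Set.Icc a (b - ξ), |f (ψ (t + ξ)) - f (T (ψ t))| ≤ ε) :
    |(∫ t in Set.Icc a b, f (T (ψ t))) - ∫ t in Set.Icc a b, f (ψ t)| ≤
      2 * ξ * ‖f‖ + (b - a) * ε := by
  simp only [integral_Icc_eq_integral_Ioc, ← intervalIntegral.integral_of_le hab,
    ← Real.norm_eq_abs]
  exact intervalIntegral.norm_integral_sub_integral_le_of_shift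
    (f.intervalIntegrable_comp_s14 hψ a b) ((f.compContinuous T).intervalIntegrable_comp_s14 hψ a b)
    (fun t => f.norm_coe_le_norm _) (fun t => f.norm_coe_le_norm _) hξ0 hξ happrox

theorem limit_measure_invariant_of_shift_general
    (X : Type*) [MetricSpace X] [MeasurableSpace X] [BorelSpace X]
    (a b : ℝ) (hab : a < b)
    (u : ℝ → X → X) (s₀ : ℝ)
    (hu : UniformContinuous (u s₀))
    (f : X →ᵇ ℝ)
    (Ψ : ℕ → ℝ → X) (hΨ : ∀ i, Measurable (Ψ i))
    (μ : ℕ → Measure X)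
    -- `μᵢ` is the normalized parameter measure of the curve `Ψᵢ`
    (hμdef : ∀ (i : ℕ) (g : X →ᵇ ℝ),
      ∫ x, g x ∂(μ i) = (1 / (b - a)) * ∫ t in Set.Icc a b, g (Ψ i t))
    (ξ : ℕ → ℝ) (hξ0 : ∀ i, 0 ≤ ξ i) (hξ : Tendsto ξ atTop (𝓝 0))
    (ε : ℕ → ℝ) (hε : Tendsto ε atTop (𝓝 0))
    -- the shifted curve approximates the `u s₀`-translate of the curve
    (happrox : ∀ i, ∀ t ∈ Set.Icc a (b - ξ i),
      |f (Ψ i (t + ξ i)) - f (u s₀ (Ψ i t))| ≤ ε i)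
    (μlim : Measure X)
    (hconv : ∀ g : X →ᵇ ℝ,
      Tendsto (fun i => ∫ x, g x ∂(μ i)) atTop (𝓝 (∫ x, g x ∂μlim))) :
    ∫ x, f (u s₀ x) ∂μlim = ∫ x, f x ∂μlim := by
  have hba : 0 < b - a := sub_pos.2 hab
  let T : C(X, X) := ⟨u s₀, hu.continuous⟩
  have hclose : ∀ᶠ i in atTop, ‖∫ x, f.compContinuous T x ∂(μ i) - ∫ x, f x ∂(μ i)‖ ≤
      1 / (b - a) * (2 * ξ i * ‖f‖ + (b - a) * ε i) := by
    filter_upwards [hξ.eventually_le_const hba] with i hξi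
    rw [hμdef, hμdef, ← mul_sub, norm_mul, Real.norm_of_nonneg (by positivity)]
    gcongr
    exact f.abs_setIntegral_Icc_comp_sub_le_of_shift T (hΨ i) hab.le (hξ0 i) hξi (happrox i)
  have hbound : Tendsto (fun i => 1 / (b - a) * (2 * ξ i * ‖f‖ + (b - a) * ε i)) atTop (𝓝 0) := by
    simpa using
      (((hξ.const_mul 2).mul_const ‖f‖).add (hε.const_mul (b - a))).const_mul (1 / (b - a))
  exact eq_of_tendsto_of_norm_sub_le (hconv _) (hconv f) hbound hclose

/-- Abstract shifting argument from Theorem 3.1: if probability measures `μᵢ` are the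
parameter measures of curves `Ψᵢ : [a,b] → X`, a small shift `t ↦ t + ξᵢ` of the curves
approximates the action of `u s₀` up to errors `εᵢ → 0`, and `μᵢ → μ` weak-*, then the
limit measure `μ` is invariant under `u s₀` (tested against `f`). -/
theorem limit_measure_invariant_of_shift
    (X : Type*) [MetricSpace X] [MeasurableSpace X] [BorelSpace X]
    (a b : ℝ) (hab : a < b)
    (u : ℝ → X → X) (s₀ : ℝ)
    (hu : UniformContinuous (u s₀))
    (f : X →ᵇ ℝ) (hf : UniformContinuous f)
    (Ψ : ℕ → ℝ → X) (hΨ : ∀ i, Measurable (Ψ i))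
    (μ : ℕ → Measure X) (hμprob : ∀ i, IsProbabilityMeasure (μ i))
    -- `μᵢ` is the normalized parameter measure of the curve `Ψᵢ`
    (hμdef : ∀ (i : ℕ) (g : X →ᵇ ℝ),
      ∫ x, g x ∂(μ i) = (1 / (b - a)) * ∫ t in Set.Icc a b, g (Ψ i t))
    (ξ : ℕ → ℝ) (hξ0 : ∀ i, 0 ≤ ξ i) (hξ : Tendsto ξ atTop (𝓝 0))
    (ε : ℕ → ℝ) (hε : Tendsto ε atTop (𝓝 0))
    -- the shifted curve approximates the `u s₀`-translate of the curve
    (happrox : ∀ i, ∀ t ∈ Set.Icc a (b - ξ i),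
      |f (Ψ i (t + ξ i)) - f (u s₀ (Ψ i t))| ≤ ε i)
    (μlim : Measure X) [IsProbabilityMeasure μlim]
    (hconv : ∀ g : X →ᵇ ℝ,
      Tendsto (fun i => ∫ x, g x ∂(μ i)) atTop (𝓝 (∫ x, g x ∂μlim))) :
    ∫ x, f (u s₀ x) ∂μlim = ∫ x, f x ∂μlim :=
  limit_measure_invariant_of_shift_general X a b hab u s₀ hu f Ψ hΨ μ hμdef ξ hξ0 hξ ε hε happrox
    μlim hconv
end
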